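/- The estimator V₁ = N⁻¹ ∑_{n=1}^N f(Xₙ) f(X'ₙ) − μ̂² satisfies E[V₁] = σ_Y² − σ²/N. -/

import Mathlib

/-! Conditioning on `𝓖` and using the conditional independence of `X`, `X'` together with their
equal conditional laws gives `E[f(X) f(X')] = E[E[f(X) | 𝓖]²]`, i.e. `E[f(X) f(X')] - μ² = σ_Y²`.
The hypotheses only speak about bounded test functions, so this identity is first proved for the
truncations `max (-M) (min M f)` and then passed to the limit in `L²`, where conditional
expectation is a contraction. On the other side, pairwise independence of the samples gives
`E[μ̂²] = Var μ̂ + μ² = σ²/N + μ²`; subtracting yields the bias `σ_Y² - σ²/N`. -/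

open MeasureTheory ProbabilityTheory Filter Topology

noncomputable def truncate (M x : ℝ) : ℝ := max (-M) (min M x)

lemma continuous_truncate (M : ℝ) : Continuous (truncate M) := by
  unfold truncate; fun_prop

lemma abs_truncate_le {M : ℝ} (hM : 0 ≤ M) (x : ℝ) : |truncate M x| ≤ M := by
  unfold truncate
  rw [abs_le]
  exact ⟨le_max_left _ _, max_le (by linarith) (min_le_left _ _)⟩

lemma abs_truncate_le_abs {M : ℝ} (hM : 0 ≤ M) (x : ℝ) : |truncate M x| ≤ |x| := by
  unfold truncate
  rw [abs_le]
  constructor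
  · exact le_max_of_le_right (le_min (by linarith [abs_nonneg x]) (neg_abs_le x))
  · exact max_le (by linarith [abs_nonneg x]) ((min_le_right _ _).trans (le_abs_self x))

lemma tendsto_truncate (x : ℝ) : Tendsto (fun M : ℕ => truncate M x) atTop (𝓝 x) := by
  refine tendsto_atTop_of_eventually_const (i₀ := ⌈|x|⌉₊) fun M hM => ?_
  obtain ⟨h₁, h₂⟩ := abs_le.1 (Nat.ceil_le.1 hM)
  simp only [truncate, min_eq_right h₂, max_eq_right h₁]

namespace MeasureTheory

section

variable {α β ι : Type*} [MeasurableSpace α] {μ : Measure α} {p : ENNReal}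

lemma unifIntegrable_of_norm_le [NormedAddCommGroup β] {f : ι → α → β} {g : α → β}
    (hp : 1 ≤ p) (hp' : p ≠ ⊤) (hg : MemLp g p μ) (hfg : ∀ i x, ‖f i x‖ ≤ ‖g x‖) :
    UnifIntegrable f p μ := by
  intro ε hε
  obtain ⟨δ, hδ, hgδ⟩ := unifIntegrable_const (ι := Unit) hp hp' hg hε
  refine ⟨δ, hδ, fun i s hs hμs => (eLpNorm_mono fun x => ?_).trans (hgδ () s hs hμs)⟩
  by_cases hx : x ∈ s <;> simp [hx, hfg i x]

lemma MemLp.truncate {u : α → ℝ} (hu : MemLp u p μ) {M : ℝ} (hM : 0 ≤ M) :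
    MemLp (fun x => truncate M (u x)) p μ :=
  hu.of_le ((continuous_truncate M).comp_aestronglyMeasurable hu.1)
    (.of_forall fun x => abs_truncate_le_abs hM (u x))

lemma tendsto_eLpNorm_truncate_sub [IsFiniteMeasure μ] {u : α → ℝ} (hp : 1 ≤ p) (hp' : p ≠ ⊤)
    (hu : MemLp u p μ) :
    Tendsto (fun M : ℕ => eLpNorm ((fun x => truncate M (u x)) - u) p μ) atTop (𝓝 0) :=
  tendsto_Lp_finite_of_tendsto_ae hp hp'
    (fun M => (hu.truncate M.cast_nonneg).1) hu
    (unifIntegrable_of_norm_le hp hp' hu fun M x => abs_truncate_le_abs M.cast_nonneg (u x))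
    (.of_forall fun x => tendsto_truncate (u x))

lemma MemLp.integral_mul_eq_inner {u v : α → ℝ} (hu : MemLp u 2 μ) (hv : MemLp v 2 μ) :
    ∫ x, u x * v x ∂μ = inner ℝ (hu.toLp u) (hv.toLp v) := by
  rw [L2.inner_def]
  refine integral_congr_ae ?_
  filter_upwards [hu.coeFn_toLp, hv.coeFn_toLp] with x hux hvx
  simp [hux, hvx, mul_comm]

lemma tendsto_integral_mul_of_tendsto_eLpNorm {l : Filter ι} {u v : ι → α → ℝ} {u₀ v₀ : α → ℝ}
    (hu : ∀ i, MemLp (u i) 2 μ) (hv : ∀ i, MemLp (v i) 2 μ) (hu₀ : MemLp u₀ 2 μ)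
    (hv₀ : MemLp v₀ 2 μ) (huu₀ : Tendsto (fun i => eLpNorm (u i - u₀) 2 μ) l (𝓝 0))
    (hvv₀ : Tendsto (fun i => eLpNorm (v i - v₀) 2 μ) l (𝓝 0)) :
    Tendsto (fun i => ∫ x, u i x * v i x ∂μ) l (𝓝 (∫ x, u₀ x * v₀ x ∂μ)) := by
  simp only [fun i => (hu i).integral_mul_eq_inner (hv i), hu₀.integral_mul_eq_inner hv₀]
  exact ((Lp.tendsto_Lp_iff_tendsto_eLpNorm'' _ hu _ hu₀).2 huu₀).inner
    ((Lp.tendsto_Lp_iff_tendsto_eLpNorm'' _ hv _ hv₀).2 hvv₀)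

end

section

variable {Ω : Type*} {m m₀ : MeasurableSpace Ω} {P : Measure Ω}

lemma eLpNorm_condExp_sub_le {E : Type*} [NormedAddCommGroup E] [NormedSpace ℝ E] [CompleteSpace E]
    {u v : Ω → E} {p : ENNReal} (hu : Integrable u P) (hv : Integrable v P) (hp : 1 ≤ p) :
    eLpNorm (P[u|m] - P[v|m]) p P ≤ eLpNorm (u - v) p P := by
  rw [eLpNorm_congr_ae (condExp_sub hu hv m).symm]
  exact eLpNorm_condExp_le_eLpNorm _ hp

lemma integral_mul_eq_integral_condExp_sq (hm : m ≤ m₀) [SigmaFinite (P.trim hm)] {u v : Ω → ℝ}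
    (hind : P[(fun ω => u ω * v ω)|m] =ᵐ[P] fun ω => P[u|m] ω * P[v|m] ω)
    (hsame : P[u|m] =ᵐ[P] P[v|m]) :
    ∫ ω, u ω * v ω ∂P = ∫ ω, P[u|m] ω ^ 2 ∂P := by
  rw [← integral_condExp hm]
  refine integral_congr_ae ?_
  filter_upwards [hind, hsame] with ω hω hω'
  rw [hω, ← hω', sq]

theorem integral_comp_mul_comp_eq_integral_condExp_sq [IsFiniteMeasure P] (hm : m ≤ m₀)
    {F : Type*} [MeasurableSpace F] {X X' : Ω → F} {f : F → ℝ} (hf : Measurable f)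
    (hL2 : MemLp (fun ω => f (X ω)) 2 P) (hL2' : MemLp (fun ω => f (X' ω)) 2 P)
    (hind : ∀ g : F → ℝ, Measurable g → (∃ C, ∀ x, |g x| ≤ C) →
      P[(fun ω => g (X ω) * g (X' ω))|m]
        =ᵐ[P] fun ω => P[(fun ω' => g (X ω'))|m] ω * P[(fun ω' => g (X' ω'))|m] ω)
    (hsame : ∀ g : F → ℝ, Measurable g → (∃ C, ∀ x, |g x| ≤ C) →
      P[(fun ω => g (X ω))|m] =ᵐ[P] P[(fun ω => g (X' ω))|m]) :
    ∫ ω, f (X ω) * f (X' ω) ∂P = ∫ ω, P[(fun ω => f (X ω))|m] ω ^ 2 ∂P := by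
  let g (M : ℕ) (x : F) : ℝ := truncate M (f x)
  have hg_meas M : Measurable (g M) := (continuous_truncate _).measurable.comp hf
  have hg_bdd M : ∃ C, ∀ x, |g M x| ≤ C := ⟨M, fun x => abs_truncate_le M.cast_nonneg _⟩
  have hgX (M : ℕ) := hL2.truncate M.cast_nonneg
  have hgX' (M : ℕ) := hL2'.truncate M.cast_nonneg
  have hX := tendsto_eLpNorm_truncate_sub one_le_two ENNReal.ofNat_ne_top hL2
  have hX' := tendsto_eLpNorm_truncate_sub one_le_two ENNReal.ofNat_ne_top hL2'
  have hcondExp : Tendsto (fun M : ℕ =>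
      eLpNorm (P[(fun ω => g M (X ω))|m] - P[(fun ω => f (X ω))|m]) 2 P) atTop (𝓝 0) :=
    tendsto_of_tendsto_of_tendsto_of_le_of_le tendsto_const_nhds hX (fun _ => bot_le)
      fun M => eLpNorm_condExp_sub_le ((hgX M).integrable one_le_two)
        (hL2.integrable one_le_two) one_le_two
  refine tendsto_nhds_unique (tendsto_integral_mul_of_tendsto_eLpNorm hgX hgX' hL2 hL2' hX hX') ?_
  simp only [sq]
  have hc (M : ℕ) := (hgX M).condExp (m := m) one_le_two
  refine (tendsto_integral_mul_of_tendsto_eLpNorm hc hc (hL2.condExp one_le_two)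
    (hL2.condExp one_le_two) hcondExp hcondExp).congr fun M => ?_
  rw [integral_mul_eq_integral_condExp_sq hm (hind _ (hg_meas M) (hg_bdd M))
    (hsame _ (hg_meas M) (hg_bdd M))]
  simp only [g, sq]

end

end MeasureTheory

namespace ProbabilityTheory

variable {Ω ι : Type*} [MeasurableSpace Ω] {P : Measure Ω} [Fintype ι] [Nonempty ι]
  {Z : ι → Ω → ℝ} {a : ℝ}

lemma integral_average (hZ : ∀ i, Integrable (Z i) P) (hmean : ∀ i, ∫ ω, Z i ω ∂P = a) :
    ∫ ω, (Fintype.card ι : ℝ)⁻¹ * ∑ i, Z i ω ∂P = a := by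
  rw [integral_const_mul, integral_finsetSum _ fun i _ => hZ i]
  simp [hmean]

lemma variance_average_of_pairwise_indepFun (hZ : ∀ i, MemLp (Z i) 2 P)
    (hindep : Pairwise fun i j => IndepFun (Z i) (Z j) P) {s : ℝ}
    (hvar : ∀ i, variance (Z i) P = s) :
    variance (fun ω => (Fintype.card ι : ℝ)⁻¹ * ∑ i, Z i ω) P = s / Fintype.card ι := by
  have hsum : variance (fun ω => ∑ i, Z i ω) P = Fintype.card ι * s := by
    rw [← Finset.sum_fn, IndepFun.variance_sum (fun i _ => hZ i) fun i _ j _ hij => hindep hij]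
    simp [hvar]
  rw [variance_const_mul, hsum]
  field_simp

lemma integral_sq_average_of_pairwise_indepFun [IsProbabilityMeasure P]
    (hZ : ∀ i, MemLp (Z i) 2 P) (hindep : Pairwise fun i j => IndepFun (Z i) (Z j) P)
    {s : ℝ} (hmean : ∀ i, ∫ ω, Z i ω ∂P = a) (hvar : ∀ i, variance (Z i) P = s) :
    ∫ ω, ((Fintype.card ι : ℝ)⁻¹ * ∑ i, Z i ω) ^ 2 ∂P = s / Fintype.card ι + a ^ 2 := by
  have hL2 : MemLp (fun ω => (Fintype.card ι : ℝ)⁻¹ * ∑ i, Z i ω) 2 P :=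
    (memLp_finsetSum _ fun i _ => hZ i).const_mul _
  have h := variance_eq_sub hL2
  rw [variance_average_of_pairwise_indepFun hZ hindep hvar,
    integral_average (fun i => (hZ i).integrable one_le_two) hmean] at h
  simp only [Pi.pow_apply] at h
  linarith

end ProbabilityTheory

theorem estimator_V1_bias_general
    {Ω E F : Type*} (𝓖 : MeasurableSpace Ω)
    [MeasurableSpace Ω] [MeasurableSpace E] [MeasurableSpace F]
    (P : Measure Ω) [IsProbabilityMeasure P]
    (Y : Ω → E) (X X' : Ω → F) (f : F → ℝ)
    (hY : Measurable Y) (hX : Measurable X) (hX' : Measurable X') (hf : Measurable f)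
    (hL2 : MemLp (fun ω => f (X ω)) 2 P) (hL2' : MemLp (fun ω => f (X' ω)) 2 P)
    (h𝓖 : 𝓖 = MeasurableSpace.comap Y inferInstance)
    -- conditional independence of `X` and `X'` given `𝓖 = σ(Y)`
    (hCondIndep : ∀ g h : F → ℝ, Measurable g → Measurable h →
      (∃ C, ∀ x, |g x| ≤ C) → (∃ C, ∀ x, |h x| ≤ C) →
      P[(fun ω => g (X ω) * h (X' ω))|𝓖]
        =ᵐ[P] fun ω => ((P[(fun ω' => g (X ω'))|𝓖]) ω) * ((P[(fun ω' => h (X' ω'))|𝓖]) ω))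
    -- `X` and `X'` have the same conditional distribution given `𝓖`
    (hSameCondDist : ∀ g : F → ℝ, Measurable g → (∃ C, ∀ x, |g x| ≤ C) →
      P[(fun ω => g (X ω))|𝓖] =ᵐ[P] P[(fun ω => g (X' ω))|𝓖])
    (σ2 σY2 : ℝ)
    (hσ2 : σ2 = variance (fun ω => f (X ω)) P)
    (hσY2 : σY2 = variance (P[(fun ω => f (X ω))|𝓖]) P)
    (N : ℕ) (hN : 0 < N)
    -- i.i.d. sample triples `(Yₙ, Xₙ, X'ₙ)` with the same joint distribution as `(Y, X, X')`
    (Ys : Fin N → Ω → E) (Xs Xs' : Fin N → Ω → F)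
    (hYs : ∀ n, Measurable (Ys n)) (hXs : ∀ n, Measurable (Xs n)) (hXs' : ∀ n, Measurable (Xs' n))
    (hIndep : iIndepFun (fun n ω => (Ys n ω, Xs n ω, Xs' n ω)) P)
    (hIdent : ∀ n, Measure.map (fun ω => (Ys n ω, Xs n ω, Xs' n ω)) P
        = Measure.map (fun ω => (Y ω, X ω, X' ω)) P)
    (muHat : Ω → ℝ)
    (hmuHat : ∀ ω, muHat ω = (N : ℝ)⁻¹ * ∑ n, f (Xs n ω))
    :
    ∫ ω, ((N : ℝ)⁻¹ * ∑ n, f (Xs n ω) * f (Xs' n ω) - muHat ω ^ 2) ∂P = σY2 - σ2 / (N : ℝ) := by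
  have : Nonempty (Fin N) := ⟨⟨0, hN⟩⟩
  have hm : 𝓖 ≤ ‹MeasurableSpace Ω› := h𝓖 ▸ hY.comap_le
  have hid n : IdentDistrib (fun ω => (Ys n ω, Xs n ω, Xs' n ω)) (fun ω => (Y ω, X ω, X' ω)) P P :=
    ⟨by fun_prop, by fun_prop, hIdent n⟩
  have hfst : Measurable fun p : E × F × F => f p.2.1 := by fun_prop
  have hfX n : IdentDistrib (fun ω => f (Xs n ω)) (fun ω => f (X ω)) P P := (hid n).comp hfst
  have hfXX' n : IdentDistrib (fun ω => f (Xs n ω) * f (Xs' n ω)) (fun ω => f (X ω) * f (X' ω))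
      P P :=
    (hid n).comp (u := fun p : E × F × F => f p.2.1 * f p.2.2) (by fun_prop)
  have hfXs_L2 n : MemLp (fun ω => f (Xs n ω)) 2 P := (hfX n).symm.memLp_snd hL2
  have hfXXs_int n : Integrable (fun ω => f (Xs n ω) * f (Xs' n ω)) P :=
    (hfXX' n).symm.integrable_snd (hL2.integrable_mul hL2')
  have hcross : ∫ ω, (N : ℝ)⁻¹ * ∑ n, f (Xs n ω) * f (Xs' n ω) ∂P
      = ∫ ω, P[(fun ω => f (X ω))|𝓖] ω ^ 2 ∂P := by
    rw [← integral_comp_mul_comp_eq_integral_condExp_sq hm hf hL2 hL2'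
      (fun g hg hgC => hCondIndep g g hg hg hgC hgC) hSameCondDist]
    simpa using integral_average hfXXs_int fun n => (hfXX' n).integral_eq
  have hmuHat_sq : ∫ ω, ((N : ℝ)⁻¹ * ∑ n, f (Xs n ω)) ^ 2 ∂P
      = σ2 / N + (∫ ω, f (X ω) ∂P) ^ 2 := by
    simpa using integral_sq_average_of_pairwise_indepFun
      (Z := fun n ω => f (Xs n ω)) hfXs_L2
      (fun n n' hnn' => (hIndep.indepFun hnn').comp hfst hfst)
      (fun n => (hfX n).integral_eq) fun n => hσ2 ▸ (hfX n).variance_eq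
  have hσY2' : σY2 = ∫ ω, P[(fun ω => f (X ω))|𝓖] ω ^ 2 ∂P - (∫ ω, f (X ω) ∂P) ^ 2 := by
    rw [hσY2, variance_eq_sub (hL2.condExp one_le_two), integral_condExp hm]
    rfl
  simp only [hmuHat]
  rw [integral_sub ((integrable_finsetSum _ fun n _ => hfXXs_int n).const_mul _)
    ((memLp_finsetSum _ fun n _ => hfXs_L2 n).const_mul _).integrable_sq, hcross, hmuHat_sq,
    hσY2']
  ring

/-- `E[V₁] = σ_Y² - σ²/N` where `V₁ = N⁻¹ ∑ₙ f(Xₙ) f(X'ₙ) - μ̂²`. -/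
theorem estimator_V1_bias
    {Ω E F : Type*} (𝓖 : MeasurableSpace Ω)
    [MeasurableSpace Ω] [MeasurableSpace E] [MeasurableSpace F]
    (P : Measure Ω) [IsProbabilityMeasure P]
    (Y : Ω → E) (X X' : Ω → F) (f : F → ℝ)
    (hY : Measurable Y) (hX : Measurable X) (hX' : Measurable X') (hf : Measurable f)
    (hL2 : MemLp (fun ω => f (X ω)) 2 P) (hL2' : MemLp (fun ω => f (X' ω)) 2 P)
    (h𝓖 : 𝓖 = MeasurableSpace.comap Y inferInstance)
    -- conditional independence of `X` and `X'` given `𝓖 = σ(Y)`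
    (hCondIndep : ∀ g h : F → ℝ, Measurable g → Measurable h →
      (∃ C, ∀ x, |g x| ≤ C) → (∃ C, ∀ x, |h x| ≤ C) →
      P[(fun ω => g (X ω) * h (X' ω))|𝓖]
        =ᵐ[P] fun ω => ((P[(fun ω' => g (X ω'))|𝓖]) ω) * ((P[(fun ω' => h (X' ω'))|𝓖]) ω))
    -- `X` and `X'` have the same conditional distribution given `𝓖`
    (hSameCondDist : ∀ g : F → ℝ, Measurable g → (∃ C, ∀ x, |g x| ≤ C) →
      P[(fun ω => g (X ω))|𝓖] =ᵐ[P] P[(fun ω => g (X' ω))|𝓖])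
    (μ σ2 σY2 : ℝ) (hμ : μ = ∫ ω, f (X ω) ∂P)
    (hσ2 : σ2 = variance (fun ω => f (X ω)) P)
    (hσY2 : σY2 = variance (P[(fun ω => f (X ω))|𝓖]) P)
    (N : ℕ) (hN : 0 < N)
    -- i.i.d. sample triples `(Yₙ, Xₙ, X'ₙ)` with the same joint distribution as `(Y, X, X')`
    (Ys : Fin N → Ω → E) (Xs Xs' : Fin N → Ω → F)
    (hYs : ∀ n, Measurable (Ys n)) (hXs : ∀ n, Measurable (Xs n)) (hXs' : ∀ n, Measurable (Xs' n))
    (hIndep : iIndepFun (fun n ω => (Ys n ω, Xs n ω, Xs' n ω)) P)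
    (hIdent : ∀ n, Measure.map (fun ω => (Ys n ω, Xs n ω, Xs' n ω)) P
        = Measure.map (fun ω => (Y ω, X ω, X' ω)) P)
    (muHat muHat' : Ω → ℝ)
    (hmuHat : ∀ ω, muHat ω = (N : ℝ)⁻¹ * ∑ n, f (Xs n ω))
    (hmuHat' : ∀ ω, muHat' ω = (N : ℝ)⁻¹ * ∑ n, f (Xs' n ω))
    :
    ∫ ω, ((N : ℝ)⁻¹ * ∑ n, f (Xs n ω) * f (Xs' n ω) - muHat ω ^ 2) ∂P = σY2 - σ2 / (N : ℝ) :=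
  estimator_V1_bias_general 𝓖 P Y X X' f hY hX hX' hf hL2 hL2' h𝓖 hCondIndep hSameCondDist σ2 σY2
    hσ2 hσY2 N hN Ys Xs Xs' hYs hXs hXs' hIndep hIdent muHat hmuHat
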